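/- Let I be a school matching instance and let a,ā∈A be distinct students such that M_0(a)≠M_0(ā) and M_z(a)≠M_z(ā), where M_0 and M_z are the student-optimal and student-pessimal stable matchings. Then for every school b∈B, exactly one of the following holds: (1) there is no stable matching M∈S(I) with M(a)=M(ā)=b; (2) there exists a unique pair of rotations ρ_in, ρ_out ∈ R(I) such that for every M∈S(I), M(a)=M(ā)=b if and only if ρ_in∈R_M and ρ_out∉R_M; moreover, in case (2), ρ_in ▷ ρ_out in the rotation poset. -/

import Mathlib

open Classical
open scoped ENNReal

noncomputable section

namespace SM

/-- A school matching instance: students `A`, schools `B`, strict preference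
orders over the other side plus the outside option `∅` (encoded as `none`),
and quotas `q b ≤ |A|`. -/
structure SchoolInstance (A B : Type) [Fintype A] [Fintype B] where
  prefA : A → Option B → Option B → Prop
  prefB : B → Option A → Option A → Prop
  prefA_sto : ∀ a, IsStrictTotalOrder (Option B) (prefA a)
  prefB_sto : ∀ b, IsStrictTotalOrder (Option A) (prefB b)
  q : B → ℕ
  q_le : ∀ b, q b ≤ Fintype.card A

variable {A B : Type} [Fintype A] [Fintype B] [DecidableEq A] [DecidableEq B]

/-- A matching: every student is assigned a school or the outside option, and
each school receives at most `q b` students.  (A school is implicitly paired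
with the outside option exactly when it has strictly fewer than `q b`
students, and a student is paired with the outside option exactly when it has
no school; this determines the set of pairs of the matching.) -/
structure Matching {A B : Type} [Fintype A] [Fintype B] (I : SchoolInstance A B) where
  toFun : A → Option B
  quota : ∀ b : B, (Finset.univ.filter fun a => toFun a = some b).card ≤ I.q b

instance (I : SchoolInstance A B) : Nonempty (Matching I) := by
  refine ⟨⟨fun _ => none, fun b => ?_⟩⟩
  have h : (Finset.univ.filter fun _ : A => (none : Option B) = some b) = ∅ :=
    Finset.filter_false_of_mem (by intro a _; simp)
  rw [h, Finset.card_empty]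
  exact Nat.zero_le _

/-- The students assigned to school `b`. -/
def assignedTo (I : SchoolInstance A B) (M : Matching I) (b : B) : Finset A :=
  Finset.univ.filter fun a => M.toFun a = some b

/-- School `b` has strictly fewer than `q b` students, i.e. is also paired
with the outside option. -/
def hasSlack (I : SchoolInstance A B) (M : Matching I) (b : B) : Prop :=
  (assignedTo I M b).card < I.q b

/-- `x ∈ M(b)`: the partners of school `b` (students assigned to it, plus the
outside option when it is under quota). -/
def inPartners (I : SchoolInstance A B) (M : Matching I) (b : B) (x : Option A) : Prop :=
  (∃ a : A, x = some a ∧ M.toFun a = some b) ∨ (x = none ∧ hasSlack I M b)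

/-- `M(b)` as a set. -/
def partnersSet (I : SchoolInstance A B) (M : Matching I) (b : B) : Set (Option A) :=
  {x | inPartners I M b x}

/-- The pair `ab` blocks `M`. -/
def BlocksPair (I : SchoolInstance A B) (M : Matching I) (a : A) (b : B) : Prop :=
  I.prefA a (some b) (M.toFun a) ∧ ∃ x, inPartners I M b x ∧ I.prefB b (some a) x

/-- Student `a` blocks `M` (prefers the outside option to its partner). -/
def BlocksStudent (I : SchoolInstance A B) (M : Matching I) (a : A) : Prop :=
  I.prefA a none (M.toFun a)

/-- School `b` blocks `M` (prefers the outside option to one of its partners). -/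
def BlocksSchool (I : SchoolInstance A B) (M : Matching I) (b : B) : Prop :=
  ∃ a : A, M.toFun a = some b ∧ I.prefB b none (some a)

/-- Stability: no blocking pair and no blocking agent. -/
def Stable (I : SchoolInstance A B) (M : Matching I) : Prop :=
  (¬ ∃ a b, BlocksPair I M a b) ∧ (¬ ∃ a, BlocksStudent I M a) ∧ (¬ ∃ b, BlocksSchool I M b)

/-- `M ≥ M'`: every student weakly prefers `M` to `M'`. -/
def matGE (I : SchoolInstance A B) (M M' : Matching I) : Prop :=
  ∀ a : A, M.toFun a = M'.toFun a ∨ I.prefA a (M.toFun a) (M'.toFun a)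

/-- `M' < M` in the student order. -/
def matLT (I : SchoolInstance A B) (M' M : Matching I) : Prop :=
  matGE I M M' ∧ M'.toFun ≠ M.toFun

/-- `M'` is an immediate predecessor of `M` in `(S(I), ≥)`. -/
def ImmPred (I : SchoolInstance A B) (M' M : Matching I) : Prop :=
  Stable I M' ∧ Stable I M ∧ matLT I M' M ∧
    ¬ ∃ M'' : Matching I, Stable I M'' ∧ matLT I M' M'' ∧ matLT I M'' M

/-- The type in which rotations live: pairs `(ρ₊, ρ₋)` of sets of
student/school pairs (with the outside option allowed on either side). -/
abbrev Rot (A B : Type) : Type :=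
  Finset (Option A × Option B) × Finset (Option A × Option B)

/-- The set of pairs of a matching: each student with its partner, and each
under-quota school with the outside option. -/
def pairsOf (I : SchoolInstance A B) (M : Matching I) : Finset (Option A × Option B) :=
  Finset.univ.filter fun p =>
    (∃ a : A, p = (some a, M.toFun a)) ∨ (∃ b : B, hasSlack I M b ∧ p = (none, some b))

/-- The rotation `ρ(M, M') = (M ∖ M', M' ∖ M)`. -/
def rho (I : SchoolInstance A B) (M M' : Matching I) : Rot A B :=
  (pairsOf I M \ pairsOf I M', pairsOf I M' \ pairsOf I M)

/-- `R(I)`: the set of all rotations of `I`. -/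
def RotSet (I : SchoolInstance A B) : Set (Rot A B) :=
  {r | ∃ M M' : Matching I, ImmPred I M' M ∧ r = rho I M M'}

/-- `c` is a maximal chain of stable matchings from `M0` down to `M`:
consecutive entries are immediate predecessors. -/
def chainTo (I : SchoolInstance A B) (M0 M : Matching I) (c : List (Matching I)) : Prop :=
  c.head? = some M0 ∧ c.getLast? = some M ∧ (∀ N ∈ c, Stable I N) ∧
    List.Chain' (fun X Y => ImmPred I Y X) c

/-- The set of rotations eliminated along the chain `c`. -/
def chainRots (I : SchoolInstance A B) (c : List (Matching I)) : Set (Rot A B) :=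
  {r | ∃ (i : ℕ) (X Y : Matching I), getElem? c i = some X ∧ getElem? c (i + 1) = some Y ∧ r = rho I X Y}

/-- `ρ` is exposed in `M`. -/
def Exposed (I : SchoolInstance A B) (r : Rot A B) (M : Matching I) : Prop :=
  ∃ M', ImmPred I M' M ∧ r = rho I M M'

/-- The rotation poset `ρ ⊵ ρ'` (relative to the rotation-set map `RM`):
either `ρ = ρ'`, or `ρ ∈ R_M` for every stable `M` in which `ρ'` is exposed. -/
def domRel (I : SchoolInstance A B) (RM : Matching I → Set (Rot A B)) (r r' : Rot A B) : Prop :=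
  r = r' ∨ ∀ M, Stable I M → Exposed I r' M → r ∈ RM M

/-- `ρ ▷ ρ'`. -/
def strictDom (I : SchoolInstance A B) (RM : Matching I → Set (Rot A B)) (r r' : Rot A B) : Prop :=
  domRel I RM r r' ∧ r ≠ r'

/-- `R ⊆ R(I)` is upper-closed in the rotation poset. -/
def UpperClosed (I : SchoolInstance A B) (RM : Matching I → Set (Rot A B))
    (R : Set (Rot A B)) : Prop :=
  R ⊆ RotSet I ∧ ∀ r' ∈ R, ∀ r ∈ RotSet I, domRel I RM r r' → r ∈ R

/-- `N` is the join `M ∨ M'` (least upper bound) in `(S(I), ≥)`. -/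
def IsJoin (I : SchoolInstance A B) (M M' N : Matching I) : Prop :=
  Stable I N ∧ matGE I N M ∧ matGE I N M' ∧
    ∀ P, Stable I P → matGE I P M → matGE I P M' → matGE I P N

/-- `N` is the meet `M ∧ M'` (greatest lower bound) in `(S(I), ≥)`. -/
def IsMeet (I : SchoolInstance A B) (M M' N : Matching I) : Prop :=
  Stable I N ∧ matGE I M N ∧ matGE I M' N ∧
    ∀ P, Stable I P → matGE I M P → matGE I M' P → matGE I N P

/-- `F` is a (nonempty) sublattice of the lattice of stable matchings. -/
def IsSublattice (I : SchoolInstance A B) (F : Set (Matching I)) : Prop :=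
  F.Nonempty ∧ (∀ M ∈ F, Stable I M) ∧
    (∀ M ∈ F, ∀ M' ∈ F, ∃ N ∈ F, IsJoin I M M' N) ∧
    (∀ M ∈ F, ∀ M' ∈ F, ∃ N ∈ F, IsMeet I M M' N)

/-- `ρ ~ ρ'`: the two rotations are eliminated together in every matching of `F`. -/
def rotEquiv (I : SchoolInstance A B) (RM : Matching I → Set (Rot A B))
    (F : Set (Matching I)) (r r' : Rot A B) : Prop :=
  ∀ M ∈ F, (r ∈ RM M ↔ r' ∈ RM M)

/-- The trivial meta-rotation `θ₀^F` of rotations eliminated in every matching of `F`. -/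
def theta0 (I : SchoolInstance A B) (RM : Matching I → Set (Rot A B))
    (F : Set (Matching I)) : Set (Rot A B) :=
  {r | r ∈ RotSet I ∧ ∀ M ∈ F, r ∈ RM M}

/-- The trivial meta-rotation `θ_z^F` of rotations eliminated in no matching of `F`. -/
def thetaZ (I : SchoolInstance A B) (RM : Matching I → Set (Rot A B))
    (F : Set (Matching I)) : Set (Rot A B) :=
  {r | r ∈ RotSet I ∧ ∀ M ∈ F, r ∉ RM M}

/-- `θ` is a meta-rotation of `F` (an equivalence class of `~`). -/
def IsMetaRot (I : SchoolInstance A B) (RM : Matching I → Set (Rot A B))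
    (F : Set (Matching I)) (θ : Set (Rot A B)) : Prop :=
  ∃ r ∈ RotSet I, θ = {r' | r' ∈ RotSet I ∧ rotEquiv I RM F r r'}

/-- `θ` is a proper meta-rotation of `F`. -/
def IsProperMeta (I : SchoolInstance A B) (RM : Matching I → Set (Rot A B))
    (F : Set (Matching I)) (θ : Set (Rot A B)) : Prop :=
  IsMetaRot I RM F θ ∧ θ ≠ theta0 I RM F ∧ θ ≠ thetaZ I RM F

/-- `θ ⊵^F θ'` on (proper) meta-rotations. -/
def metaDom (I : SchoolInstance A B) (RM : Matching I → Set (Rot A B))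
    (F : Set (Matching I)) (θ θ' : Set (Rot A B)) : Prop :=
  ∀ M ∈ F, θ' ⊆ RM M → θ ⊆ RM M

/-- `Θ_M`: the set of proper meta-rotations contained in `R_M`. -/
def ThetaM (I : SchoolInstance A B) (RM : Matching I → Set (Rot A B))
    (F : Set (Matching I)) (M : Matching I) : Set (Set (Rot A B)) :=
  {θ | IsProperMeta I RM F θ ∧ θ ⊆ RM M}

/-- `Θ` is an upper-closed set of proper meta-rotations. -/
def UCProper (I : SchoolInstance A B) (RM : Matching I → Set (Rot A B))
    (F : Set (Matching I)) (Θ : Set (Set (Rot A B))) : Prop :=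
  (∀ θ ∈ Θ, IsProperMeta I RM F θ) ∧
    ∀ θ' ∈ Θ, ∀ θ, IsProperMeta I RM F θ → metaDom I RM F θ θ' → θ ∈ Θ

/-- `M_R`: the stable matching whose rotation set is `R` (via definite description). -/
def MofR (I : SchoolInstance A B) (RM : Matching I → Set (Rot A B))
    (R : Set (Rot A B)) : Matching I :=
  Classical.epsilon fun M => Stable I M ∧ RM M = R

/-- `R^θ = θ₀^F ∪ ⋃ {θ' proper : θ' ⊵^F θ}`. -/
def Rup (I : SchoolInstance A B) (RM : Matching I → Set (Rot A B))
    (F : Set (Matching I)) (θ : Set (Rot A B)) : Set (Rot A B) :=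
  theta0 I RM F ∪ ⋃₀ {θ' | IsProperMeta I RM F θ' ∧ metaDom I RM F θ' θ}

/-- `R_θ = θ₀^F ∪ ⋃ {θ' proper : θ' ▷^F θ}`. -/
def Rdn (I : SchoolInstance A B) (RM : Matching I → Set (Rot A B))
    (F : Set (Matching I)) (θ : Set (Rot A B)) : Set (Rot A B) :=
  theta0 I RM F ∪ ⋃₀ {θ' | IsProperMeta I RM F θ' ∧ metaDom I RM F θ' θ ∧ θ' ≠ θ}

/-- `M^θ`. -/
def Mup (I : SchoolInstance A B) (RM : Matching I → Set (Rot A B))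
    (F : Set (Matching I)) (θ : Set (Rot A B)) : Matching I :=
  MofR I RM (Rup I RM F θ)

/-- `M_θ`. -/
def Mdn (I : SchoolInstance A B) (RM : Matching I → Set (Rot A B))
    (F : Set (Matching I)) (θ : Set (Rot A B)) : Matching I :=
  MofR I RM (Rdn I RM F θ)

/-- The meet `M ∧ M'` in the lattice of stable matchings (via definite description). -/
def meetM (I : SchoolInstance A B) (M M' : Matching I) : Matching I :=
  Classical.epsilon fun N => IsMeet I M M' N

/-- First order differential `∂f_θ = f(M^θ) − f(M_θ)`. -/
def d1 (I : SchoolInstance A B) (RM : Matching I → Set (Rot A B))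
    (F : Set (Matching I)) (f : Matching I → ℝ) (θ : Set (Rot A B)) : ℝ :=
  f (Mup I RM F θ) - f (Mdn I RM F θ)

/-- Second order differential
`∂²f_{θ,θ'} = f(M^θ ∧ M_{θ'}) + f(M_θ ∧ M^{θ'}) − f(M_θ ∧ M_{θ'}) − f(M^θ ∧ M^{θ'})`. -/
def d2 (I : SchoolInstance A B) (RM : Matching I → Set (Rot A B))
    (F : Set (Matching I)) (f : Matching I → ℝ) (θ θ' : Set (Rot A B)) : ℝ :=
  f (meetM I (Mup I RM F θ) (Mdn I RM F θ')) + f (meetM I (Mdn I RM F θ) (Mup I RM F θ'))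
    - f (meetM I (Mdn I RM F θ) (Mdn I RM F θ')) - f (meetM I (Mup I RM F θ) (Mup I RM F θ'))

/-- The greatest element `M₀^F` of `F` (via definite description). -/
def topF (I : SchoolInstance A B) (F : Set (Matching I)) : Matching I :=
  Classical.epsilon fun N => N ∈ F ∧ ∀ P ∈ F, matGE I N P

/-- Vertices of the digraph: all rotations, plus a source `s` and sink `t`. -/
abbrev Vtx (A B : Type) : Type := Rot A B ⊕ Bool

/-- The source `s`. -/
def srcV : Vtx A B := Sum.inr true

/-- The sink `t`. -/
def tgtV : Vtx A B := Sum.inr false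

/-- The value of the cut `S` for the capacity function `u`: the total capacity
of the arcs leaving `S`. -/
def cutVal (u : Vtx A B → Vtx A B → ℝ≥0∞) (S : Set (Vtx A B)) : ℝ≥0∞ :=
  ∑ p : Vtx A B × Vtx A B, if p.1 ∈ S ∧ p.2 ∉ S then u p.1 p.2 else 0

/-- The `s`-`t` cut `{s} ∪ R`. -/
def cutOf (R : Set (Rot A B)) : Set (Vtx A B) := insert srcV (Sum.inl '' R)

/-- `(u, C)` witnesses minimum cut representability of `Π(f, F)`: for every
`R ⊆ R(I)`, the cut `{s} ∪ R` has finite capacity iff `R` is upper-closed and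
`M_R ∈ F`, and in that case its value is `f(M_R) + C`. -/
def MinCutRepWith (I : SchoolInstance A B) (RM : Matching I → Set (Rot A B))
    (F : Set (Matching I)) (f : Matching I → ℝ)
    (u : Vtx A B → Vtx A B → ℝ≥0∞) (C : ℝ) : Prop :=
  ∀ R : Set (Rot A B), R ⊆ RotSet I →
    ((cutVal u (cutOf R) ≠ ⊤ ↔
        (UpperClosed I RM R ∧ ∃ M, Stable I M ∧ RM M = R ∧ M ∈ F)) ∧
      (∀ M, Stable I M → RM M = R → M ∈ F → (cutVal u (cutOf R)).toReal = f M + C))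

/-- The problem `Π(f, F)` is minimum cut representable. -/
def MinCutRep (I : SchoolInstance A B) (RM : Matching I → Set (Rot A B))
    (F : Set (Matching I)) (f : Matching I → ℝ) : Prop :=
  ∃ u C, MinCutRepWith I RM F f u C

/-- The cut digraph `D^{f,F}` (with representative rotations `rep` and
constant `γ`); capacities of parallel arcs are added. -/
def cutDigraph (I : SchoolInstance A B) (RM : Matching I → Set (Rot A B))
    (F : Set (Matching I)) (f : Matching I → ℝ)
    (rep : Set (Rot A B) → Rot A B) (γ : ℝ) : Vtx A B → Vtx A B → ℝ≥0∞ :=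
  fun x y =>
    (if ∃ θ, IsMetaRot I RM F θ ∧ ∃ r ∈ θ, ∃ r' ∈ θ, r ≠ r' ∧ x = Sum.inl r ∧ y = Sum.inl r'
      then ⊤ else 0)
    + (if ∃ θ θ', IsProperMeta I RM F θ ∧ IsProperMeta I RM F θ' ∧ θ ≠ θ' ∧
          metaDom I RM F θ' θ ∧ x = Sum.inl (rep θ) ∧ y = Sum.inl (rep θ')
        then ⊤ else 0)
    + (∑ θ : Set (Rot A B), ∑ θ' : Set (Rot A B),
        if IsProperMeta I RM F θ ∧ IsProperMeta I RM F θ' ∧ θ ≠ θ' ∧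
            x = Sum.inl (rep θ) ∧ y = Sum.inl (rep θ')
        then ENNReal.ofReal ((1 / 2) * d2 I RM F f θ θ') else 0)
    + (if (theta0 I RM F).Nonempty ∧ x = srcV ∧ y = Sum.inl (rep (theta0 I RM F))
        then ⊤ else 0)
    + (if (thetaZ I RM F).Nonempty ∧ x = Sum.inl (rep (thetaZ I RM F)) ∧ y = tgtV
        then ⊤ else 0)
    + (∑ θ : Set (Rot A B),
        if IsProperMeta I RM F θ ∧ x = Sum.inl (rep θ) ∧ y = tgtV
        then ENNReal.ofReal (d1 I RM F f θ -
          (1 / 2) * (∑ θ' : Set (Rot A B),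
            if IsProperMeta I RM F θ' ∧ θ' ≠ θ then d2 I RM F f θ θ' else 0) + γ)
        else 0)
    + (∑ θ : Set (Rot A B),
        if IsProperMeta I RM F θ ∧ x = srcV ∧ y = Sum.inl (rep θ)
        then ENNReal.ofReal γ else 0)

/-- `b` prefers `S'` to `S''`: every member of `S'` is preferred to every
member of `S'' ∖ S'`. -/
def prefersSet (I : SchoolInstance A B) (b : B) (S' S'' : Set (Option A)) : Prop :=
  ∀ x ∈ S', ∀ y ∈ S'', y ∉ S' → I.prefB b x y

/-- `A(ρ)`: students appearing in `ρ₊`. -/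
def Aof (r : Rot A B) : Set A := {a | ∃ b : B, (some a, some b) ∈ r.1}

/-- `B(ρ)`: schools appearing in `ρ₊`. -/
def Bof (r : Rot A B) : Set B := {b | ∃ a : A, (some a, some b) ∈ r.1}

/-- `ρ₊(b)`: students matched to `b` in `ρ₊`. -/
def rhoPlusB (r : Rot A B) (b : B) : Set A := {a | (some a, some b) ∈ r.1}

/-- `R^ρ = {ρ' : ρ' ⊵ ρ}`. -/
def RupRot (I : SchoolInstance A B) (RM : Matching I → Set (Rot A B))
    (r : Rot A B) : Set (Rot A B) :=
  {r' | r' ∈ RotSet I ∧ domRel I RM r' r}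

/-- `R_ρ = {ρ' : ρ' ▷ ρ}`. -/
def RdnRot (I : SchoolInstance A B) (RM : Matching I → Set (Rot A B))
    (r : Rot A B) : Set (Rot A B) :=
  {r' | r' ∈ RotSet I ∧ strictDom I RM r' r}

/-- `M^ρ`. -/
def MupRot (I : SchoolInstance A B) (RM : Matching I → Set (Rot A B))
    (r : Rot A B) : Matching I :=
  MofR I RM (RupRot I RM r)

/-- `M_ρ`. -/
def MdnRot (I : SchoolInstance A B) (RM : Matching I → Set (Rot A B))
    (r : Rot A B) : Matching I :=
  MofR I RM (RdnRot I RM r)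

/-- First order differential of `f` at a rotation: `∂f_ρ = f(M^ρ) − f(M_ρ)`. -/
def d1Rot (I : SchoolInstance A B) (RM : Matching I → Set (Rot A B))
    (f : Matching I → ℝ) (r : Rot A B) : ℝ :=
  f (MupRot I RM r) - f (MdnRot I RM r)

/-- Second order differential of `f` at a pair of distinct rotations. -/
def d2Rot (I : SchoolInstance A B) (RM : Matching I → Set (Rot A B))
    (f : Matching I → ℝ) (r r' : Rot A B) : ℝ :=
  f (meetM I (MupRot I RM r) (MdnRot I RM r')) + f (meetM I (MdnRot I RM r) (MupRot I RM r'))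
    - f (meetM I (MdnRot I RM r) (MdnRot I RM r'))
    - f (meetM I (MupRot I RM r) (MupRot I RM r'))

/-- The pair `(ρ_in, ρ_out)` characterizes the stable matchings assigning both
siblings `a, ā` to school `b`. -/
def siblingChar (I : SchoolInstance A B) (RM : Matching I → Set (Rot A B))
    (a abar : A) (b : B) (p : Rot A B × Rot A B) : Prop :=
  ∀ M : Matching I, Stable I M →
    ((M.toFun a = some b ∧ M.toFun abar = some b) ↔ (p.1 ∈ RM M ∧ p.2 ∉ RM M))

/-- Some stable matching assigns both `a` and `ā` to `b`. -/
def goodSchool (I : SchoolInstance A B) (a abar : A) (b : B) : Prop :=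
  ∃ M, Stable I M ∧ M.toFun a = some b ∧ M.toFun abar = some b

/-- The pair `(ρ_in(a,ā,b), ρ_out(a,ā,b))` (via definite description). -/
def siblingPair (I : SchoolInstance A B) (RM : Matching I → Set (Rot A B))
    (a abar : A) (b : B) : Rot A B × Rot A B :=
  Classical.epsilon fun p => p.1 ∈ RotSet I ∧ p.2 ∈ RotSet I ∧
    siblingChar I RM a abar b p ∧ strictDom I RM p.1 p.2

/-- `R_in(a, ā)`. -/
def Rin (I : SchoolInstance A B) (RM : Matching I → Set (Rot A B))
    (a abar : A) : Set (Rot A B) :=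
  {r | ∃ b, goodSchool I a abar b ∧ r = (siblingPair I RM a abar b).1}

/-- `R_out(a, ā)`. -/
def Rout (I : SchoolInstance A B) (RM : Matching I → Set (Rot A B))
    (a abar : A) : Set (Rot A B) :=
  {r | ∃ b, goodSchool I a abar b ∧ r = (siblingPair I RM a abar b).2}

/-- The indicator function: `0` when the siblings are matched to the same
school, `1` otherwise. -/
def sibIndicator (I : SchoolInstance A B) (a abar : A) : Matching I → ℝ :=
  fun M => if M.toFun a = M.toFun abar then 0 else 1

end SM

/-!
The stable matchings sending both `a` and `ā` to `b` are closed under joins and meets, which are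
taken student by student, and are convex; so, when there are any, they are exactly the stable
matchings of an interval `[Mb, Mt]`, whose ends differ from `M₀` and `M_z`. Take covers
`Mt ⋖ Y` and `Z ⋖ Mb`, and let `ρ_in`, `ρ_out` be the rotations they eliminate. A rotation moves
the same students in the same way wherever it is eliminated; with the rural hospitals theorem
this shows that every cover eliminating `ρ_in` ends in the interval and every cover eliminating
`ρ_out` starts in it. Hence `M(a) = M(ā) = b` iff `ρ_in ∈ R_M` and `ρ_out ∉ R_M`. A pair with
this property must consist of the rotations of the covers `Mt ⋖ Y` and `Z ⋖ Mb`, across which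
the property changes, and `ρ_in ▷ ρ_out` since a matching exposing `ρ_out` lies in the interval.
-/

lemma Finset.exists_mem_notMem_of_card_eq {α : Type*} {s t : Finset α} {u : α}
    (h : s.card = t.card) (hus : u ∈ s) (hut : u ∉ t) : ∃ x ∈ t, x ∉ s := by
  have : (s.erase u).card < t.card := by
    rw [Finset.card_erase_of_mem hus, ← h]
    exact Nat.sub_lt (Finset.card_pos.2 ⟨u, hus⟩) one_pos
  obtain ⟨x, hxt, hxs⟩ := Finset.exists_mem_notMem_of_card_lt_card this
  exact ⟨x, hxt, fun hx => hxs (Finset.mem_erase.2 ⟨ne_of_mem_of_not_mem hxt hut, hx⟩)⟩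

namespace SM

variable {A B : Type} [Fintype A] [Fintype B]

section Preferences

variable (I : SchoolInstance A B)

instance (a : A) : IsStrictTotalOrder (Option B) (I.prefA a) := I.prefA_sto a

instance (b : B) : IsStrictTotalOrder (Option A) (I.prefB b) := I.prefB_sto b

def WeaklyPrefers (a : A) (x y : Option B) : Prop := x = y ∨ I.prefA a x y

variable {I} {a : A} {x y z : Option B}

lemma WeaklyPrefers.trans (h₁ : WeaklyPrefers I a x y) (h₂ : WeaklyPrefers I a y z) :
    WeaklyPrefers I a x z := by
  rcases h₁ with rfl | h₁
  · exact h₂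
  rcases h₂ with rfl | h₂
  · exact Or.inr h₁
  · exact Or.inr (_root_.trans h₁ h₂)

lemma WeaklyPrefers.antisymm (h₁ : WeaklyPrefers I a x y) (h₂ : WeaklyPrefers I a y x) :
    x = y :=
  h₁.resolve_right fun h => h₂.elim (fun e => irrefl x (e ▸ h)) (asymm h)

lemma WeaklyPrefers.prefA_of_ne (h : WeaklyPrefers I a x y) (hne : x ≠ y) : I.prefA a x y :=
  h.resolve_left hne

lemma WeaklyPrefers.trans_prefA (h₁ : WeaklyPrefers I a x y) (h₂ : I.prefA a y z) :
    I.prefA a x z :=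
  h₁.elim (fun e => e ▸ h₂) (fun h => _root_.trans h h₂)

lemma prefA_trans_weaklyPrefers (h₁ : I.prefA a x y) (h₂ : WeaklyPrefers I a y z) :
    I.prefA a x z :=
  h₂.elim (fun e => e ▸ h₁) (_root_.trans h₁)

lemma weaklyPrefers_of_not (h : ¬ WeaklyPrefers I a x y) : WeaklyPrefers I a y x := by
  rcases trichotomous_of (I.prefA a) x y with h' | rfl | h'
  · exact absurd (Or.inr h') h
  · exact Or.inl rfl
  · exact Or.inr h'

end Preferences

section Order

variable {I : SchoolInstance A B}

lemma Matching.toFun_injective : Function.Injective (Matching.toFun (I := I)) := by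
  rintro ⟨f, _⟩ ⟨g, _⟩ rfl
  rfl

/-- `N ≤ M` iff `matGE I M N`: greater is better for the students. -/
instance : PartialOrder (Matching I) where
  le N M := matGE I M N
  le_refl M _ := Or.inl rfl
  le_trans _ _ _ h₁ h₂ a := WeaklyPrefers.trans (h₂ a) (h₁ a)
  le_antisymm _ _ h₁ h₂ :=
    Matching.toFun_injective (funext fun a => WeaklyPrefers.antisymm (h₂ a) (h₁ a))

instance : Finite (Matching I) := Finite.of_injective _ Matching.toFun_injective

lemma weaklyPrefers_of_le {M N : Matching I} (h : N ≤ M) (a : A) :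
    WeaklyPrefers I a (M.toFun a) (N.toFun a) := h a

lemma matLT_iff_lt {M N : Matching I} : matLT I N M ↔ N < M := by
  rw [lt_iff_le_and_ne, matLT, Ne, Matching.toFun_injective.eq_iff]
  rfl

end Order

section Stability

variable [DecidableEq B] {I : SchoolInstance A B} {M : Matching I} {a y : A} {b : B}

lemma mem_assignedTo : a ∈ assignedTo I M b ↔ M.toFun a = some b := by
  simp [assignedTo]

lemma card_assignedTo_le_quota (M : Matching I) (b : B) : (assignedTo I M b).card ≤ I.q b := by
  unfold assignedTo
  convert M.quota b

lemma Stable.prefB_of_prefA (hM : Stable I M) (hw : I.prefA a (some b) (M.toFun a))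
    (hy : M.toFun y = some b) : I.prefB b (some y) (some a) := by
  rcases trichotomous_of (I.prefB b) (some y) (some a) with h | h | h
  · exact h
  · cases h
    exact absurd (hy ▸ hw) (irrefl _)
  · exact absurd ⟨a, b, hw, some y, Or.inl ⟨y, rfl, hy⟩, h⟩ hM.1

lemma Stable.prefB_some_none (hM : Stable I M) (ha : M.toFun a = some b) :
    I.prefB b (some a) none := by
  rcases trichotomous_of (I.prefB b) (some a) none with h | h | h
  · exact h
  · cases h
  · exact absurd ⟨b, a, ha, h⟩ hM.2.2

lemma Stable.weaklyPrefers_none (hM : Stable I M) (a : A) :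
    WeaklyPrefers I a (M.toFun a) none := by
  by_contra h
  exact hM.2.1 ⟨a, (weaklyPrefers_of_not h).prefA_of_ne fun e => h (Or.inl e.symm)⟩

lemma Stable.card_assignedTo_eq_quota (hM : Stable I M) (hw : I.prefA a (some b) (M.toFun a))
    (hacc : I.prefB b (some a) none) : (assignedTo I M b).card = I.q b := by
  by_contra hne
  have hslack : hasSlack I M b := lt_of_le_of_ne (card_assignedTo_le_quota M b) hne
  exact hM.1 ⟨a, b, hw, none, Or.inr ⟨rfl, hslack⟩, hacc⟩

end Stability

section RuralHospitals

open Finset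

variable [DecidableEq B]

lemma card_filter_none_add_sum (f : A → Option B) :
    #{a | f a = none} + ∑ c, #{a | f a = some c} = Fintype.card A := by
  rw [← Fintype.sum_option (fun o => #{a | f a = o}), ← card_univ]
  exact (card_eq_sum_card_fiberwise fun _ _ => mem_univ _).symm

lemma card_filter_eq_of_forall_le {f g : A → Option B}
    (hle : ∀ c, #{a | f a = some c} ≤ #{a | g a = some c})
    (hnone : ∀ a, f a = none → g a = none) (c : B) :
    #{a | f a = some c} = #{a | g a = some c} := by
  have hunassigned : #{a | f a = none} ≤ #{a | g a = none} :=
    card_le_card fun a ha => by simpa using hnone a (by simpa using ha)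
  have hsum : ∑ c, #{a | f a = some c} = ∑ c, #{a | g a = some c} :=
    le_antisymm (sum_le_sum fun c _ => hle c)
      (by have := card_filter_none_add_sum f; have := card_filter_none_add_sum g; omega)
  exact (sum_eq_sum_iff_of_le fun c _ => hle c).1 hsum c (mem_univ c)

variable {I : SchoolInstance A B} {M N U V : Matching I} {b : B}

lemma card_assignedTo_le_of_le (hM : Stable I M) (hN : Stable I N) (h : N ≤ M) (c : B) :
    #(assignedTo I M c) ≤ #(assignedTo I N c) := by
  by_cases hsub : assignedTo I M c ⊆ assignedTo I N c
  · exact card_le_card hsub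
  obtain ⟨x, hxM, hxN⟩ := not_subset.1 hsub
  rw [mem_assignedTo] at hxM hxN
  have hw : I.prefA x (some c) (N.toFun x) :=
    (hxM ▸ weaklyPrefers_of_le h x).prefA_of_ne (Ne.symm hxN)
  rw [hN.card_assignedTo_eq_quota hw (hM.prefB_some_none hxM)]
  exact card_assignedTo_le_quota M c

/-- Rural hospitals theorem for comparable stable matchings. -/
lemma card_assignedTo_eq_of_le (hM : Stable I M) (hN : Stable I N) (h : N ≤ M) (c : B) :
    #(assignedTo I M c) = #(assignedTo I N c) :=
  card_filter_eq_of_forall_le (card_assignedTo_le_of_le hM hN h)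
    (fun a ha => (hN.weaklyPrefers_none a).antisymm (ha ▸ weaklyPrefers_of_le h a)) c

lemma card_assignedTo_eq {M0 : Matching I} (hM0 : IsGreatest {M | Stable I M} M0)
    (hM : Stable I M) (hN : Stable I N) (c : B) :
    #(assignedTo I M c) = #(assignedTo I N c) :=
  (card_assignedTo_eq_of_le hM0.1 hM (hM0.2 hM) c).symm.trans
    (card_assignedTo_eq_of_le hM0.1 hN (hM0.2 hN) c)

lemma exists_leaves_of_enters (hU : Stable I U) (hV : Stable I V) (hVU : V ≤ U) {u : A}
    (huV : V.toFun u = some b) (huU : U.toFun u ≠ some b) :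
    ∃ l, U.toFun l = some b ∧ V.toFun l ≠ some b := by
  obtain ⟨l, hlU, hlV⟩ := exists_mem_notMem_of_card_eq
    (card_assignedTo_eq_of_le hU hV hVU b).symm (mem_assignedTo.2 huV) (mt mem_assignedTo.1 huU)
  exact ⟨l, mem_assignedTo.1 hlU, mt mem_assignedTo.2 hlV⟩

end RuralHospitals

section Lattice

open Finset

variable {I : SchoolInstance A B} {M N : Matching I}

def supFun (M N : Matching I) (a : A) : Option B :=
  if WeaklyPrefers I a (M.toFun a) (N.toFun a) then M.toFun a else N.toFun a

def infFun (M N : Matching I) (a : A) : Option B :=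
  if WeaklyPrefers I a (M.toFun a) (N.toFun a) then N.toFun a else M.toFun a

lemma supFun_infFun_cases (M N : Matching I) (a : A) :
    (supFun M N a = M.toFun a ∧ infFun M N a = N.toFun a) ∨
      (supFun M N a = N.toFun a ∧ infFun M N a = M.toFun a) := by
  unfold supFun infFun
  split_ifs
  exacts [Or.inl ⟨rfl, rfl⟩, Or.inr ⟨rfl, rfl⟩]

lemma supFun_eq_or (M N : Matching I) (a : A) :
    supFun M N a = M.toFun a ∨ supFun M N a = N.toFun a :=
  (supFun_infFun_cases M N a).imp And.left And.left

lemma infFun_eq_or (M N : Matching I) (a : A) :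
    infFun M N a = M.toFun a ∨ infFun M N a = N.toFun a :=
  (supFun_infFun_cases M N a).symm.imp And.right And.right

lemma weaklyPrefers_supFun_left (M N : Matching I) (a : A) :
    WeaklyPrefers I a (supFun M N a) (M.toFun a) := by
  unfold supFun
  split_ifs with h
  exacts [Or.inl rfl, weaklyPrefers_of_not h]

lemma weaklyPrefers_supFun_right (M N : Matching I) (a : A) :
    WeaklyPrefers I a (supFun M N a) (N.toFun a) := by
  unfold supFun
  split_ifs with h
  exacts [h, Or.inl rfl]

lemma weaklyPrefers_infFun_left (M N : Matching I) (a : A) :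
    WeaklyPrefers I a (M.toFun a) (infFun M N a) := by
  unfold infFun
  split_ifs with h
  exacts [h, Or.inl rfl]

lemma weaklyPrefers_infFun_right (M N : Matching I) (a : A) :
    WeaklyPrefers I a (N.toFun a) (infFun M N a) := by
  unfold infFun
  split_ifs with h
  exacts [Or.inl rfl, weaklyPrefers_of_not h]

lemma supFun_eq_of_ne_left {x : A} {w : Option B} (h : supFun M N x = w)
    (hne : M.toFun x ≠ w) : N.toFun x = w ∧ I.prefA x w (M.toFun x) :=
  ⟨((supFun_eq_or M N x).resolve_left (h ▸ Ne.symm hne)).symm.trans h,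
    (h ▸ weaklyPrefers_supFun_left M N x).prefA_of_ne (Ne.symm hne)⟩

lemma supFun_eq_of_ne_right {x : A} {w : Option B} (h : supFun M N x = w)
    (hne : N.toFun x ≠ w) : M.toFun x = w ∧ I.prefA x w (N.toFun x) :=
  ⟨((supFun_eq_or M N x).resolve_right (h ▸ Ne.symm hne)).symm.trans h,
    (h ▸ weaklyPrefers_supFun_right M N x).prefA_of_ne (Ne.symm hne)⟩

variable [DecidableEq B]

/-- Two students who moved up to `c` from different sides would each be preferred by `c` to the
other. -/
lemma supFun_roster_subset (hM : Stable I M) (hN : Stable I N) (c : B) :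
    (∀ x, supFun M N x = some c → M.toFun x = some c) ∨
      (∀ x, supFun M N x = some c → N.toFun x = some c) := by
  by_contra! ⟨⟨x, hxc, hxM⟩, ⟨y, hyc, hyN⟩⟩
  obtain ⟨hxN, hxw⟩ := supFun_eq_of_ne_left hxc hxM
  obtain ⟨hyM, hyw⟩ := supFun_eq_of_ne_right hyc hyN
  exact asymm (hM.prefB_of_prefA hxw hyM) (hN.prefB_of_prefA hyw hxN)

variable {M0 : Matching I}

lemma card_supFun (hM0 : IsGreatest {M | Stable I M} M0) (hM : Stable I M) (hN : Stable I N)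
    (c : B) : #{a | supFun M N a = some c} = #(assignedTo I M c) := by
  refine card_filter_eq_of_forall_le (fun c => ?_) (fun a ha => ?_) c
  · rcases supFun_roster_subset hM hN c with h | h
    · exact card_le_card fun x hx => mem_assignedTo.2 (h x (by simpa using hx))
    · rw [show #{a | M.toFun a = some c} = #(assignedTo I N c) from
        card_assignedTo_eq hM0 hM hN c]
      exact card_le_card fun x hx => mem_assignedTo.2 (h x (by simpa using hx))
  · exact (hM.weaklyPrefers_none a).antisymm (ha ▸ weaklyPrefers_supFun_left M N a)

lemma card_supFun_add_card_infFun (M N : Matching I) (c : B) :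
    #{a | supFun M N a = some c} + #{a | infFun M N a = some c} =
      #(assignedTo I M c) + #(assignedTo I N c) := by
  simp only [assignedTo, card_filter, ← sum_add_distrib]
  refine sum_congr rfl fun a _ => ?_
  rcases supFun_infFun_cases M N a with ⟨h₁, h₂⟩ | ⟨h₁, h₂⟩
  · rw [h₁, h₂]
  · rw [h₁, h₂, add_comm]

lemma card_infFun (hM0 : IsGreatest {M | Stable I M} M0) (hM : Stable I M) (hN : Stable I N)
    (c : B) : #{a | infFun M N a = some c} = #(assignedTo I N c) := by
  have := card_supFun_add_card_infFun M N c
  rw [card_supFun hM0 hM hN c] at this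
  omega

lemma stable_of_forall_eq_or (hM : Stable I M) (hN : Stable I N) {J : Matching I}
    (hJ : ∀ a, J.toFun a = M.toFun a ∨ J.toFun a = N.toFun a)
    (hpair : ¬ ∃ a c, BlocksPair I J a c) : Stable I J := by
  refine ⟨hpair, ?_, ?_⟩
  · rintro ⟨a, ha⟩
    rcases hJ a with h | h <;> rw [BlocksStudent, h] at ha
    exacts [hM.2.1 ⟨a, ha⟩, hN.2.1 ⟨a, ha⟩]
  · rintro ⟨c, a, hac, ha⟩
    rcases hJ a with h | h <;> rw [h] at hac
    exacts [hM.2.2 ⟨c, a, hac, ha⟩, hN.2.2 ⟨c, a, hac, ha⟩]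

lemma exists_sup (hM0 : IsGreatest {M | Stable I M} M0) (hM : Stable I M) (hN : Stable I N) :
    ∃ J : Matching I, Stable I J ∧ J.toFun = supFun M N := by
  have hcard := card_supFun hM0 hM hN
  refine ⟨⟨supFun M N, fun c => ?_⟩,
    stable_of_forall_eq_or hM hN (supFun_eq_or M N) ?_, rfl⟩
  · convert card_assignedTo_le_quota M c using 1
    convert hcard c
  rintro ⟨x, c, hw, w, hw', hp⟩
  have hwM : I.prefA x (some c) (M.toFun x) :=
    prefA_trans_weaklyPrefers hw (weaklyPrefers_supFun_left M N x)
  have hwN : I.prefA x (some c) (N.toFun x) :=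
    prefA_trans_weaklyPrefers hw (weaklyPrefers_supFun_right M N x)
  rcases hw' with ⟨y, rfl, hy⟩ | ⟨rfl, hslack⟩
  · rcases supFun_roster_subset hM hN c with h | h
    · exact asymm hp (hM.prefB_of_prefA hwM (h y hy))
    · exact asymm hp (hN.prefB_of_prefA hwN (h y hy))
  · change #{a | supFun M N a = some c} < I.q c at hslack
    have := hcard c
    have := hM.card_assignedTo_eq_quota hwM hp
    omega

/-- If `y` comes from `N` but not from `M`, then `c` lost `y` in `supFun M N`, so it gained some
`z` from `M`, and stability of `N` and `M` gives `y ≻_c z ≻_c x`. -/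
lemma not_prefB_of_prefA_of_weaklyPrefers (hM0 : IsGreatest {M | Stable I M} M0)
    (hM : Stable I M) (hN : Stable I N) {x y : A} {c : B} (hw : I.prefA x (some c) (M.toFun x))
    (hyM : WeaklyPrefers I y (M.toFun y) (some c))
    (hy : M.toFun y = some c ∨ N.toFun y = some c) : ¬ I.prefB c (some x) (some y) := by
  intro hp
  by_cases hMy : M.toFun y = some c
  · exact asymm hp (hM.prefB_of_prefA hw hMy)
  have hNy : N.toFun y = some c := hy.resolve_left hMy
  obtain ⟨J, hJ, hJf⟩ := exists_sup hM0 hM hN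
  have hyJ : y ∉ assignedTo I J c := fun h => irrefl (some c)
    ((mem_assignedTo.1 h ▸ hJf ▸ weaklyPrefers_supFun_left M N y).trans_prefA
      (hyM.prefA_of_ne hMy))
  obtain ⟨z, hzJ, hzN⟩ := exists_mem_notMem_of_card_eq (card_assignedTo_eq hM0 hN hJ c)
    (mem_assignedTo.2 hNy) hyJ
  rw [mem_assignedTo, hJf] at hzJ
  obtain ⟨hMz, hzw⟩ := supFun_eq_of_ne_right hzJ (mt mem_assignedTo.2 hzN)
  exact irrefl _ (_root_.trans (_root_.trans (hN.prefB_of_prefA hzw hNy)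
    (hM.prefB_of_prefA hw hMz)) hp)

lemma exists_inf (hM0 : IsGreatest {M | Stable I M} M0) (hM : Stable I M) (hN : Stable I N) :
    ∃ K : Matching I, Stable I K ∧ K.toFun = infFun M N := by
  have hcard := card_infFun hM0 hM hN
  refine ⟨⟨infFun M N, fun c => ?_⟩,
    stable_of_forall_eq_or hM hN (infFun_eq_or M N) ?_, rfl⟩
  · convert card_assignedTo_le_quota N c using 1
    convert hcard c
  rintro ⟨x, c, hw, w, hw', hp⟩
  change I.prefA x (some c) (infFun M N x) at hw
  rcases hw' with ⟨y, rfl, hy⟩ | ⟨rfl, hslack⟩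
  · change infFun M N y = some c at hy
    rcases infFun_eq_or M N x with h | h <;> rw [h] at hw
    · exact not_prefB_of_prefA_of_weaklyPrefers hM0 hM hN hw (hy ▸ weaklyPrefers_infFun_left M N y)
        ((infFun_eq_or M N y).imp (fun h => h.symm.trans hy) (fun h => h.symm.trans hy)) hp
    · exact not_prefB_of_prefA_of_weaklyPrefers hM0 hN hM hw (hy ▸ weaklyPrefers_infFun_right M N y)
        ((infFun_eq_or M N y).imp (fun h => h.symm.trans hy) (fun h => h.symm.trans hy)).symm hp
  · change #{a | infFun M N a = some c} < I.q c at hslack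
    have := hcard c
    have := card_assignedTo_eq hM0 hM hN c
    have : #(assignedTo I M c) = I.q c ∨ #(assignedTo I N c) = I.q c := by
      rcases infFun_eq_or M N x with h | h <;> rw [h] at hw
      exacts [Or.inl (hM.card_assignedTo_eq_quota hw hp),
        Or.inr (hN.card_assignedTo_eq_quota hw hp)]
    omega

end Lattice

section Covers

variable [DecidableEq B] {I : SchoolInstance A B} {M N : Matching I}

lemma ImmPred.lt (h : ImmPred I N M) : N < M := matLT_iff_lt.1 h.2.2.1

lemma immPred_of_covBy {N M : {M : Matching I // Stable I M}} (h : N ⋖ M) : ImmPred I N.1 M.1 :=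
  ⟨N.2, M.2, matLT_iff_lt.2 h.1, fun ⟨K, hK, hNK, hKM⟩ =>
    h.2 (c := ⟨K, hK⟩) (matLT_iff_lt.1 hNK) (matLT_iff_lt.1 hKM)⟩

lemma exists_immPred_le_of_lt (hN : Stable I N) (hM : Stable I M) (h : N < M) :
    ∃ U, ImmPred I N U ∧ U ≤ M := by
  obtain ⟨U, hNU, hUM⟩ :=
    exists_covBy_le_of_lt (α := {M : Matching I // Stable I M}) (a := ⟨N, hN⟩) (b := ⟨M, hM⟩) h
  exact ⟨U.1, immPred_of_covBy hNU, hUM⟩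

lemma exists_le_immPred_of_lt (hN : Stable I N) (hM : Stable I M) (h : N < M) :
    ∃ U, N ≤ U ∧ ImmPred I U M := by
  obtain ⟨U, hNU, hUM⟩ :=
    exists_le_covBy_of_lt (α := {M : Matching I // Stable I M}) (a := ⟨N, hN⟩) (b := ⟨M, hM⟩) h
  exact ⟨U.1, hNU, immPred_of_covBy hUM⟩

end Covers

section Chains

variable [DecidableEq B] {I : SchoolInstance A B} {M0 X Y : Matching I} {c : List (Matching I)}

lemma chainTo_singleton (hM : Stable I M0) : chainTo I M0 M0 [M0] :=
  ⟨rfl, rfl, by simpa using hM, List.isChain_singleton M0⟩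

lemma chainTo_concat (hc : chainTo I M0 X c) (h : ImmPred I Y X) :
    chainTo I M0 Y (c ++ [Y]) := by
  obtain ⟨hhead, hlast, hstable, hchain⟩ := hc
  refine ⟨by simp [List.head?_append, hhead], by simp, ?_, ?_⟩
  · simpa [or_imp, forall_and, h.1] using hstable
  · refine List.IsChain.append hchain (List.isChain_singleton Y) ?_
    simp [hlast, h]

lemma exists_chainTo (hM0 : IsGreatest {M | Stable I M} M0) (hX : Stable I X) :
    ∃ c, chainTo I M0 X c := by
  induction X using WellFoundedGT.induction with
  | _ X ih =>
    rcases (hM0.2 hX).eq_or_lt with rfl | hlt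
    · exact ⟨[X], chainTo_singleton hX⟩
    obtain ⟨U, hXU, hUM0⟩ := exists_immPred_le_of_lt hX hM0.1 hlt
    obtain ⟨c, hc⟩ := ih U hXU.lt hXU.2.1
    exact ⟨c ++ [X], chainTo_concat hc hXU⟩

variable [DecidableEq A]

lemma chainRots_singleton (M : Matching I) : chainRots I [M] = ∅ := by
  ext r
  simp [chainRots]

lemma chainRots_concat (hc : c.getLast? = some X) (Y : Matching I) :
    chainRots I (c ++ [Y]) = insert (rho I X Y) (chainRots I c) := by
  obtain ⟨l, rfl⟩ := List.getLast?_eq_some_iff.1 hc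
  ext r
  simp only [chainRots, Set.mem_insert_iff, Set.mem_ofPred_eq]
  constructor
  · rintro ⟨i, P, Q, hP, hQ, rfl⟩
    rcases lt_trichotomy (i + 1) (l.length + 1) with h | h | h
    · refine Or.inr ⟨i, P, Q, ?_, ?_, rfl⟩
      · rwa [List.getElem?_append_left (by simp; omega)] at hP
      · rwa [List.getElem?_append_left (by simp; omega)] at hQ
    · obtain rfl : i = l.length := by omega
      simp at hP hQ
      rw [hP, hQ]
      exact Or.inl rfl
    · rw [List.getElem?_eq_none (by simp; omega)] at hQ
      cases hQ
  · rintro (rfl | ⟨i, P, Q, hP, hQ, rfl⟩)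
    · exact ⟨l.length, X, Y, by simp, by simp, rfl⟩
    · have : i + 1 < (l ++ [X]).length := (List.getElem?_eq_some_iff.1 hQ).1
      refine ⟨i, P, Q, ?_, ?_, rfl⟩
      · rwa [List.getElem?_append_left (by omega)]
      · rwa [List.getElem?_append_left (by omega)]

end Chains

section Rotations

variable [DecidableEq A] [DecidableEq B] {I : SchoolInstance A B} {X Y X' Y' : Matching I}
  {m : A}

lemma mem_pairsOf_some {M : Matching I} {w : Option B} :
    (some m, w) ∈ pairsOf I M ↔ w = M.toFun m := by
  simp [pairsOf]

/-- A rotation records the old and the new partner of every student it moves. -/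
lemma rho_eq_apply_of_ne (hr : rho I X Y = rho I X' Y') (hm : X.toFun m ≠ Y.toFun m) :
    X'.toFun m = X.toFun m ∧ Y'.toFun m = Y.toFun m := by
  have h₁ : (some m, X.toFun m) ∈ (rho I X Y).1 := by simp [rho, mem_pairsOf_some, hm]
  have h₂ : (some m, Y.toFun m) ∈ (rho I X Y).2 := by simp [rho, mem_pairsOf_some, hm.symm]
  rw [hr] at h₁ h₂
  simp only [rho, Finset.mem_sdiff, mem_pairsOf_some] at h₁ h₂
  exact ⟨h₁.1.symm, h₂.1.symm⟩

lemma rho_eq_apply_eq (hr : rho I X Y = rho I X' Y') (hm : X.toFun m = Y.toFun m) :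
    X'.toFun m = Y'.toFun m := by
  by_contra h
  obtain ⟨hX, hY⟩ := rho_eq_apply_of_ne hr.symm h
  exact h (hX.symm.trans (hm.trans hY))

def IsRotationSetMap (I : SchoolInstance A B) (M0 : Matching I)
    (RM : Matching I → Set (Rot A B)) : Prop :=
  ∀ M c, Stable I M → chainTo I M0 M c → RM M = chainRots I c

variable {M0 M N : Matching I} {RM : Matching I → Set (Rot A B)}

lemma IsRotationSetMap.eq_empty (hM0 : IsGreatest {M | Stable I M} M0)
    (hRM : IsRotationSetMap I M0 RM) : RM M0 = ∅ :=
  (hRM M0 [M0] hM0.1 (chainTo_singleton hM0.1)).trans (chainRots_singleton M0)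

lemma IsRotationSetMap.eq_insert (hM0 : IsGreatest {M | Stable I M} M0)
    (hRM : IsRotationSetMap I M0 RM) (h : ImmPred I Y X) :
    RM Y = insert (rho I X Y) (RM X) := by
  obtain ⟨c, hc⟩ := exists_chainTo hM0 h.2.1
  rw [hRM Y _ h.1 (chainTo_concat hc h), chainRots_concat hc.2.1, ← hRM X c h.2.1 hc]

lemma IsRotationSetMap.antitone (hM0 : IsGreatest {M | Stable I M} M0)
    (hRM : IsRotationSetMap I M0 RM) (hM : Stable I M) (hN : Stable I N) (h : N ≤ M) :
    RM M ⊆ RM N := by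
  induction N using WellFoundedGT.induction with
  | _ N ih =>
    rcases h.eq_or_lt with rfl | hlt
    · exact subset_rfl
    obtain ⟨U, hNU, hUM⟩ := exists_immPred_le_of_lt hN hM hlt
    rw [hRM.eq_insert hM0 hNU]
    exact (ih U hNU.lt hNU.2.1 hUM).trans (Set.subset_insert _ _)

lemma IsRotationSetMap.exists_immPred (hM0 : IsGreatest {M | Stable I M} M0)
    (hRM : IsRotationSetMap I M0 RM) (hM : Stable I M) (hN : Stable I N) (h : N ≤ M)
    {r : Rot A B} (hrN : r ∈ RM N) (hrM : r ∉ RM M) :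
    ∃ U V, ImmPred I V U ∧ r = rho I U V ∧ U ≤ M ∧ N ≤ V := by
  induction N using WellFoundedGT.induction with
  | _ N ih =>
    rcases h.eq_or_lt with rfl | hlt
    · exact absurd hrN hrM
    obtain ⟨U, hNU, hUM⟩ := exists_immPred_le_of_lt hN hM hlt
    rw [hRM.eq_insert hM0 hNU] at hrN
    rcases hrN with rfl | hrU
    · exact ⟨U, N, hNU, rfl, hUM, le_rfl⟩
    obtain ⟨U', V', hV'U', hr, hU'M, hUV'⟩ := ih U hNU.lt hNU.2.1 hUM hrU
    exact ⟨U', V', hV'U', hr, hU'M, hNU.lt.le.trans hUV'⟩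

lemma IsRotationSetMap.rho_notMem (hM0 : IsGreatest {M | Stable I M} M0)
    (hRM : IsRotationSetMap I M0 RM) (h : ImmPred I Y X) : rho I X Y ∉ RM X := by
  intro hr
  obtain ⟨U, V, -, hUV, -, hXV⟩ := hRM.exists_immPred hM0 hM0.1 h.2.1 (hM0.2 h.2.1) hr
    (hRM.eq_empty hM0 ▸ Set.notMem_empty _)
  obtain ⟨m, hm⟩ : ∃ m, X.toFun m ≠ Y.toFun m :=
    Function.ne_iff.1 fun e => h.lt.ne (Matching.toFun_injective e).symm
  have hXY : I.prefA m (X.toFun m) (Y.toFun m) := (weaklyPrefers_of_le h.lt.le m).prefA_of_ne hm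
  exact irrefl _ ((rho_eq_apply_of_ne hUV hm).2 ▸ (weaklyPrefers_of_le hXV m).trans_prefA hXY)

end Rotations

section Invariance

open Finset

variable [DecidableEq A] [DecidableEq B] {I : SchoolInstance A B} {M0 U V U' V' : Matching I}
  {b : B} {l s : A}

/-- If `s` were worse off in `U'` than at `b`, it would block `U'` with `b`, which `l` reaches and
which prefers `s` to `l`; if better off, the join of `V` and `V'` would give `b` a student `x`
of `V'` that `b` ranks both above and below `l`. -/
lemma stays_of_rho_eq (hM0 : IsGreatest {M | Stable I M} M0) (hU : Stable I U) (hV : Stable I V)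
    (hU' : Stable I U') (hV' : Stable I V') (hVU : V ≤ U) (hr : rho I U V = rho I U' V')
    (hlU : U.toFun l = some b) (hlV : V.toFun l ≠ some b)
    (hsU : U.toFun s = some b) (hsV : V.toFun s = some b) : U'.toFun s = some b := by
  have hsU' : U'.toFun s = V'.toFun s := rho_eq_apply_eq hr (hsU.trans hsV.symm)
  obtain ⟨hlU', hlV'⟩ := rho_eq_apply_of_ne hr fun e => hlV (e ▸ hlU)
  have hlw : I.prefA l (some b) (V.toFun l) :=
    (hlU ▸ weaklyPrefers_of_le hVU l).prefA_of_ne (Ne.symm hlV)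
  have hsl : I.prefB b (some s) (some l) := hV.prefB_of_prefA hlw hsV
  by_contra hne
  rcases trichotomous_of (I.prefA s) (some b) (U'.toFun s) with hlt | heq | hgt
  · exact asymm hsl (hU'.prefB_of_prefA hlt (hlU'.trans hlU))
  · exact hne heq.symm
  obtain ⟨J, hJ, hJf⟩ := exists_sup hM0 hV hV'
  have hsJ : s ∉ assignedTo I J b := fun h => irrefl (some b)
    ((mem_assignedTo.1 h ▸ hJf ▸ weaklyPrefers_supFun_right V V' s).trans_prefA (hsU' ▸ hgt))
  obtain ⟨x, hxJ, hxV⟩ := exists_mem_notMem_of_card_eq (card_assignedTo_eq hM0 hV hJ b)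
    (mem_assignedTo.2 hsV) hsJ
  rw [mem_assignedTo, hJf] at hxJ
  rw [mem_assignedTo] at hxV
  obtain ⟨hxV', hxw⟩ := supFun_eq_of_ne_left hxJ hxV
  have hxU : U.toFun x = V.toFun x := by
    by_contra hmoved
    exact hxV ((rho_eq_apply_of_ne hr hmoved).2 ▸ hxV')
  exact asymm (hU.prefB_of_prefA (hxU ▸ hxw) hlU) (hV'.prefB_of_prefA (hlV' ▸ hlw) hxV')

lemma assigned_of_rho_eq (hM0 : IsGreatest {M | Stable I M} M0) (hU : Stable I U)
    (hV : Stable I V) (hU' : Stable I U') (hV' : Stable I V') (hVU : V ≤ U)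
    (hr : rho I U V = rho I U' V') (hlU : U.toFun l = some b) (hlV : V.toFun l ≠ some b) (s : A) :
    (U.toFun s = some b → U'.toFun s = some b) ∧ (V.toFun s = some b → V'.toFun s = some b) := by
  by_cases hs : U.toFun s = V.toFun s
  · have hstay (hsU : U.toFun s = some b) : U'.toFun s = some b :=
      stays_of_rho_eq hM0 hU hV hU' hV' hVU hr hlU hlV hsU (hs ▸ hsU)
    exact ⟨hstay, fun h => rho_eq_apply_eq hr hs ▸ hstay (hs ▸ h)⟩
  · obtain ⟨hsU', hsV'⟩ := rho_eq_apply_of_ne hr hs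
    exact ⟨fun h => hsU'.trans h, fun h => hsV'.trans h⟩

end Invariance

section Siblings

variable {I : SchoolInstance A B} {M0 K M N U V U' V' : Matching I} {a abar : A} {b : B}

def BothAt (a abar : A) (b : B) (M : Matching I) : Prop :=
  M.toFun a = some b ∧ M.toFun abar = some b

lemma bothAt_of_le_of_le (hK : BothAt a abar b K) (hM : BothAt a abar b M) (hKN : K ≤ N)
    (hNM : N ≤ M) : BothAt a abar b N :=
  ⟨(hK.1 ▸ weaklyPrefers_of_le hKN a).antisymm (hM.1 ▸ weaklyPrefers_of_le hNM a),
    (hK.2 ▸ weaklyPrefers_of_le hKN abar).antisymm (hM.2 ▸ weaklyPrefers_of_le hNM abar)⟩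

variable [DecidableEq B]

lemma exists_isGreatest_bothAt (hM0 : IsGreatest {M | Stable I M} M0)
    (h : goodSchool I a abar b) : ∃ Mt, IsGreatest {M | Stable I M ∧ BothAt a abar b M} Mt := by
  obtain ⟨Mt, hMt⟩ := (Set.toFinite _).exists_maximal h
  refine ⟨Mt, (DirectedOn.maximal_iff_isGreatest ?_).1 hMt⟩
  rintro M ⟨hM, hMa, hMabar⟩ N ⟨hN, hNa, hNabar⟩
  obtain ⟨J, hJ, hJf⟩ := exists_sup hM0 hM hN
  refine ⟨J, ⟨hJ, ?_, ?_⟩, fun x => hJf ▸ weaklyPrefers_supFun_left M N x,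
    fun x => hJf ▸ weaklyPrefers_supFun_right M N x⟩
  · exact hJf ▸ (supFun_eq_or M N a).elim (·.trans hMa) (·.trans hNa)
  · exact hJf ▸ (supFun_eq_or M N abar).elim (·.trans hMabar) (·.trans hNabar)

lemma exists_isLeast_bothAt (hM0 : IsGreatest {M | Stable I M} M0)
    (h : goodSchool I a abar b) : ∃ Mb, IsLeast {M | Stable I M ∧ BothAt a abar b M} Mb := by
  obtain ⟨Mb, hMb⟩ := (Set.toFinite _).exists_minimal h
  refine ⟨Mb, (DirectedOn.minimal_iff_isLeast ?_).1 hMb⟩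
  rintro M ⟨hM, hMa, hMabar⟩ N ⟨hN, hNa, hNabar⟩
  obtain ⟨K, hK, hKf⟩ := exists_inf hM0 hM hN
  refine ⟨K, ⟨hK, ?_, ?_⟩, fun x => hKf ▸ weaklyPrefers_infFun_left M N x,
    fun x => hKf ▸ weaklyPrefers_infFun_right M N x⟩
  · exact hKf ▸ (infFun_eq_or M N a).elim (·.trans hMa) (·.trans hNa)
  · exact hKf ▸ (infFun_eq_or M N abar).elim (·.trans hMabar) (·.trans hNabar)

variable [DecidableEq A]

lemma bothAt_lower_of_rho_eq (hM0 : IsGreatest {M | Stable I M} M0) (h : ImmPred I V U)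
    (h' : ImmPred I V' U') (hr : rho I U V = rho I U' V') (hV : BothAt a abar b V)
    (hU : ¬ BothAt a abar b U) : BothAt a abar b V' := by
  obtain ⟨u, huV, huU⟩ : ∃ u, V.toFun u = some b ∧ U.toFun u ≠ some b := by
    by_contra! hcon
    exact hU ⟨hcon a hV.1, hcon abar hV.2⟩
  obtain ⟨l, hlU, hlV⟩ := exists_leaves_of_enters h.2.1 h.1 h.lt.le huV huU
  have hmaps := assigned_of_rho_eq hM0 h.2.1 h.1 h'.2.1 h'.1 h.lt.le hr hlU hlV
  exact ⟨(hmaps a).2 hV.1, (hmaps abar).2 hV.2⟩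

lemma bothAt_upper_of_rho_eq (hM0 : IsGreatest {M | Stable I M} M0) (h : ImmPred I V U)
    (h' : ImmPred I V' U') (hr : rho I U V = rho I U' V') (hU : BothAt a abar b U)
    (hV : ¬ BothAt a abar b V) : BothAt a abar b U' := by
  obtain ⟨l, hlU, hlV⟩ : ∃ l, U.toFun l = some b ∧ V.toFun l ≠ some b := by
    by_contra! hcon
    exact hV ⟨hcon a hU.1, hcon abar hU.2⟩
  have hmaps := assigned_of_rho_eq hM0 h.2.1 h.1 h'.2.1 h'.1 h.lt.le hr hlU hlV
  exact ⟨(hmaps a).1 hU.1, (hmaps abar).1 hU.2⟩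

end Siblings

section Delimiting

variable [DecidableEq A] [DecidableEq B] {I : SchoolInstance A B}
  {M0 Mz Mt Mb X Y Z : Matching I} {RM : Matching I → Set (Rot A B)} {P : Matching I → Prop}
  {p : Rot A B × Rot A B}

def IsDelimitingPair (I : SchoolInstance A B) (RM : Matching I → Set (Rot A B))
    (P : Matching I → Prop) (p : Rot A B × Rot A B) : Prop :=
  ∀ M, Stable I M → (P M ↔ p.1 ∈ RM M ∧ p.2 ∉ RM M)

lemma IsDelimitingPair.fst_eq (hM0 : IsGreatest {M | Stable I M} M0)
    (hRM : IsRotationSetMap I M0 RM) (hp : IsDelimitingPair I RM P p) (h : ImmPred I X Y)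
    (hX : P X) (hY : ¬ P Y) : p.1 = rho I Y X := by
  obtain ⟨h1, h2⟩ := (hp X h.1).1 hX
  have h2Y : p.2 ∉ RM Y := fun h' => h2 (hRM.antitone hM0 h.2.1 h.1 h.lt.le h')
  have h1Y : p.1 ∉ RM Y := fun h' => hY ((hp Y h.2.1).2 ⟨h', h2Y⟩)
  rw [hRM.eq_insert hM0 h] at h1
  exact (Set.mem_insert_iff.1 h1).resolve_right h1Y

lemma IsDelimitingPair.snd_eq (hM0 : IsGreatest {M | Stable I M} M0)
    (hRM : IsRotationSetMap I M0 RM) (hp : IsDelimitingPair I RM P p) (h : ImmPred I X Y)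
    (hY : P Y) (hX : ¬ P X) : p.2 = rho I Y X := by
  obtain ⟨h1, h2⟩ := (hp Y h.2.1).1 hY
  have h2X : p.2 ∈ RM X := by
    by_contra h2X
    exact hX ((hp X h.1).2 ⟨hRM.antitone hM0 h.2.1 h.1 h.lt.le h1, h2X⟩)
  rw [hRM.eq_insert hM0 h] at h2X
  exact (Set.mem_insert_iff.1 h2X).resolve_right h2

lemma IsDelimitingPair.strictDom (hp : IsDelimitingPair I RM P p) (hP : ∃ M, Stable I M ∧ P M)
    (hout : ∀ M M', ImmPred I M' M → p.2 = rho I M M' → P M) : strictDom I RM p.1 p.2 := by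
  obtain ⟨M, hM, hPM⟩ := hP
  refine ⟨Or.inr fun N hN ⟨N', hN'N, hr⟩ => ((hp N hN).1 (hout N N' hN'N hr)).1, fun h => ?_⟩
  obtain ⟨h1, h2⟩ := (hp M hM).1 hPM
  exact h2 (h ▸ h1)

/-- `ρ_in ∈ R_N` iff `N ≤ Mt`, and `ρ_out ∉ R_N` iff `Mb ≤ N`. -/
lemma isDelimitingPair_rho (hM0 : IsGreatest {M | Stable I M} M0)
    (hRM : IsRotationSetMap I M0 RM) (hMz : IsLeast {M | Stable I M} Mz)
    (hMt : IsGreatest {M | Stable I M ∧ P M} Mt) (hMb : IsLeast {M | Stable I M ∧ P M} Mb)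
    (hY : ImmPred I Mt Y) (hZ : ImmPred I Z Mb)
    (hin : ∀ U V, ImmPred I V U → rho I Y Mt = rho I U V → P V)
    (hout : ∀ U V, ImmPred I V U → rho I Mb Z = rho I U V → P U)
    (hconv : ∀ N, Stable I N → Mb ≤ N → N ≤ Mt → P N) :
    IsDelimitingPair I RM P (rho I Y Mt, rho I Mb Z) := by
  intro N hN
  constructor
  · intro hPN
    refine ⟨hRM.antitone hM0 hMt.1.1 hN (hMt.2 ⟨hN, hPN⟩) ?_, fun h =>
      hRM.rho_notMem hM0 hZ (hRM.antitone hM0 hN hMb.1.1 (hMb.2 ⟨hN, hPN⟩) h)⟩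
    rw [hRM.eq_insert hM0 hY]
    exact Set.mem_insert _ _
  · rintro ⟨hinN, houtN⟩
    obtain ⟨U, V, hVU, hr, -, hNV⟩ := hRM.exists_immPred hM0 hM0.1 hN (hM0.2 hN) hinN
      (hRM.eq_empty hM0 ▸ Set.notMem_empty _)
    have houtMz : rho I Mb Z ∈ RM Mz := hRM.antitone hM0 hZ.1 hMz.1 (hMz.2 hZ.1)
      (by rw [hRM.eq_insert hM0 hZ]; exact Set.mem_insert _ _)
    obtain ⟨U', V', hVU', hr', hU'N, -⟩ := hRM.exists_immPred hM0 hN hMz.1 (hMz.2 hN) houtMz houtN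
    exact hconv N hN ((hMb.2 ⟨hVU'.2.1, hout U' V' hVU' hr'⟩).trans hU'N)
      (hNV.trans (hMt.2 ⟨hVU.1, hin U V hVU hr⟩))

theorem existsUnique_isDelimitingPair (hM0 : IsGreatest {M | Stable I M} M0)
    (hRM : IsRotationSetMap I M0 RM) (hMz : IsLeast {M | Stable I M} Mz)
    (hMt : IsGreatest {M | Stable I M ∧ P M} Mt) (hMb : IsLeast {M | Stable I M ∧ P M} Mb)
    (hP0 : ¬ P M0) (hPz : ¬ P Mz) (hconv : ∀ N, Stable I N → Mb ≤ N → N ≤ Mt → P N)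
    (hentry : ∀ U V U' V', ImmPred I V U → ImmPred I V' U' → rho I U V = rho I U' V' →
      P V → ¬ P U → P V')
    (hexit : ∀ U V U' V', ImmPred I V U → ImmPred I V' U' → rho I U V = rho I U' V' →
      P U → ¬ P V → P U') :
    (∃! p : Rot A B × Rot A B, p.1 ∈ RotSet I ∧ p.2 ∈ RotSet I ∧ IsDelimitingPair I RM P p) ∧
      ∀ p : Rot A B × Rot A B, p.1 ∈ RotSet I → p.2 ∈ RotSet I →
        IsDelimitingPair I RM P p → strictDom I RM p.1 p.2 := by
  obtain ⟨Y, hY, -⟩ := exists_immPred_le_of_lt hMt.1.1 hM0.1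
    ((hM0.2 hMt.1.1).lt_of_ne fun h => hP0 (h ▸ hMt.1.2))
  obtain ⟨Z, -, hZ⟩ := exists_le_immPred_of_lt hMz.1 hMb.1.1
    ((hMz.2 hMb.1.1).lt_of_ne fun h => hPz (h ▸ hMb.1.2))
  have hPY : ¬ P Y := fun h => hY.lt.not_ge (hMt.2 ⟨hY.2.1, h⟩)
  have hPZ : ¬ P Z := fun h => hZ.lt.not_ge (hMb.2 ⟨hZ.1, h⟩)
  have hout : ∀ U V, ImmPred I V U → rho I Mb Z = rho I U V → P U :=
    fun U V h hr => hexit Mb Z U V hZ h hr hMb.1.2 hPZ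
  have hp := isDelimitingPair_rho hM0 hRM hMz hMt hMb hY hZ
    (fun U V h hr => hentry Y Mt U V hY h hr hMt.1.2 hPY) hout hconv
  have huniq (p) (hp' : IsDelimitingPair I RM P p) : p = (rho I Y Mt, rho I Mb Z) :=
    Prod.ext (hp'.fst_eq hM0 hRM hY hMt.1.2 hPY) (hp'.snd_eq hM0 hRM hZ hMb.1.2 hPZ)
  refine ⟨⟨_, ⟨⟨Y, Mt, hY, rfl⟩, ⟨Mb, Z, hZ, rfl⟩, hp⟩, fun p hp' => huniq p hp'.2.2⟩,
    fun p _ _ hp' => ?_⟩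
  rw [huniq p hp']
  exact hp.strictDom ⟨Mt, hMt.1⟩ hout

end Delimiting

end SM

namespace SM

variable {A B : Type} [Fintype A] [Fintype B] [DecidableEq A] [DecidableEq B]

theorem stmt16_general (I : SchoolInstance A B) (M0 Mz : Matching I)
    (hM0 : Stable I M0 ∧ ∀ N, Stable I N → matGE I M0 N)
    (hMz : Stable I Mz ∧ ∀ N, Stable I N → matGE I N Mz)
    (RM : Matching I → Set (Rot A B))
    (hRM : ∀ M c, Stable I M → chainTo I M0 M c → RM M = chainRots I c)
    (a abar : A)
    (h0 : M0.toFun a ≠ M0.toFun abar) (hz : Mz.toFun a ≠ Mz.toFun abar) (b : B) :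
    Xor' (¬ ∃ M, Stable I M ∧ M.toFun a = some b ∧ M.toFun abar = some b)
      ((∃! p : Rot A B × Rot A B,
          p.1 ∈ RotSet I ∧ p.2 ∈ RotSet I ∧ siblingChar I RM a abar b p) ∧
        (∀ p : Rot A B × Rot A B, p.1 ∈ RotSet I → p.2 ∈ RotSet I →
          siblingChar I RM a abar b p → strictDom I RM p.1 p.2)) := by
  by_cases hgood : ∃ M, Stable I M ∧ M.toFun a = some b ∧ M.toFun abar = some b
  · obtain ⟨Mt, hMt⟩ := exists_isGreatest_bothAt hM0 hgood
    obtain ⟨Mb, hMb⟩ := exists_isLeast_bothAt hM0 hgood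
    exact Or.inr ⟨existsUnique_isDelimitingPair hM0 hRM hMz hMt hMb
      (fun h => h0 (h.1.trans h.2.symm)) (fun h => hz (h.1.trans h.2.symm))
      (fun _ _ => bothAt_of_le_of_le hMb.1.2 hMt.1.2)
      (fun _ _ _ _ => bothAt_lower_of_rho_eq hM0) (fun _ _ _ _ => bothAt_upper_of_rho_eq hM0),
      not_not_intro hgood⟩
  · refine Or.inl ⟨hgood, ?_⟩
    -- `(ρ, ρ)` delimits the empty condition for every rotation `ρ`, but `ρ ▷ ρ` fails.
    rintro ⟨⟨p, ⟨hp, -, -⟩, -⟩, hdom⟩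
    refine (hdom (p.1, p.1) hp hp fun M hM => ?_).2 rfl
    exact iff_of_false (fun h => hgood ⟨M, hM, h⟩) fun h => h.2 h.1

/-- the rotations governing the assignment of a pair of siblings
to a common school. -/
theorem stmt16 (I : SchoolInstance A B) (M0 Mz : Matching I)
    (hM0 : Stable I M0 ∧ ∀ N, Stable I N → matGE I M0 N)
    (hMz : Stable I Mz ∧ ∀ N, Stable I N → matGE I N Mz)
    (RM : Matching I → Set (Rot A B))
    (hRM : ∀ M c, Stable I M → chainTo I M0 M c → RM M = chainRots I c)
    (a abar : A) (hne : a ≠ abar)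
    (h0 : M0.toFun a ≠ M0.toFun abar) (hz : Mz.toFun a ≠ Mz.toFun abar) (b : B) :
    Xor' (¬ ∃ M, Stable I M ∧ M.toFun a = some b ∧ M.toFun abar = some b)
      ((∃! p : Rot A B × Rot A B,
          p.1 ∈ RotSet I ∧ p.2 ∈ RotSet I ∧ siblingChar I RM a abar b p) ∧
        (∀ p : Rot A B × Rot A B, p.1 ∈ RotSet I → p.2 ∈ RotSet I →
          siblingChar I RM a abar b p → strictDom I RM p.1 p.2)) :=
  stmt16_general I M0 Mz hM0 hMz RM hRM a abar h0 hz b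

end SM
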